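/- For every x ∈ ℝ, the function z ↦ f_ι(z,x) is nonnegative on ℝ and satisfies ∫_ℝ f_ι(z,x) dz = 1; that is, f_ι(·,x) is a probability density (here the choice of h makes the total mass of the three pieces — a trapezoid of width ξ, a near-rectangle of width 1, and a triangle of width ι — equal to 1, and the constraint ξ < (2−ι)/(1+ι) guarantees h > ι so the density is nonnegative). -/

import Mathlib

open MeasureTheory Set

/-- The normalizing constant `h = (2 + ι + ι² − ξ)/(2 + ξ + ι)`. -/
noncomputable def hconst (ι ξ : ℝ) : ℝ := (2 + ι + ι ^ 2 - ξ) / (2 + ξ + ι)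

/-- The continuous-support signal density `f_ι(z,x)`: a trapezoid of width `ξ`,
a near-rectangle of width `1`, and a triangle of width `ι`. -/
noncomputable def fIota (ι ξ z x : ℝ) : ℝ :=
  if x ≤ z ∧ z < x + ξ then 1 - (z - x) * (1 - hconst ι ξ) / ξ
  else if x + ξ ≤ z ∧ z < x + ξ + 1 then hconst ι ξ - (z - x - ξ) * ι
  else if x + ξ + 1 ≤ z ∧ z ≤ x + ξ + 1 + ι then
    hconst ι ξ - ι - (z - x - ξ - 1) * (hconst ι ξ - ι) / ι
  else 0

/-!
On each of its three pieces `f_ι(·, x)` is the affine interpolation between the values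
`1, h, h - ι, 0` at the breakpoints, so it is nonnegative as soon as `h > ι`, which is
`ξ (1 + ι) < 2 - ι`. Its integral is the sum of the trapezoid areas
`ξ (1 + h) / 2 + (2h - ι) / 2 + ι (h - ι) / 2`, which is `1` by the choice of `h`.
-/

noncomputable def chord (a b p q z : ℝ) : ℝ := p + (z - a) / (b - a) * (q - p)

section Chord

variable {a b p q : ℝ}

theorem continuous_chord (a b p q : ℝ) : Continuous (chord a b p q) := by
  unfold chord
  fun_prop

theorem chord_nonneg (hp : 0 ≤ p) (hq : 0 ≤ q) {z : ℝ} (hz : z ∈ Icc a b) :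
    0 ≤ chord a b p q z := by
  obtain rfl | hab := eq_or_lt_of_le (hz.1.trans hz.2)
  · simpa [chord] using hp
  set t := (z - a) / (b - a)
  have ht0 : 0 ≤ t := div_nonneg (sub_nonneg.2 hz.1) (sub_nonneg.2 hab.le)
  have ht1 : t ≤ 1 := (div_le_one (sub_pos.2 hab)).2 (by linarith [hz.2])
  calc 0 ≤ (1 - t) * p + t * q := by nlinarith
    _ = chord a b p q z := by unfold chord; ring

theorem integral_chord (a b p q : ℝ) :
    ∫ z in a..b, chord a b p q z = (b - a) * (p + q) / 2 := by
  obtain rfl | hab := eq_or_ne a b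
  · simp
  have hba : b - a ≠ 0 := sub_ne_zero.2 hab.symm
  have hlin : IntervalIntegrable (fun z => (z - a) / (b - a) * (q - p)) volume a b :=
    (by fun_prop : Continuous fun z : ℝ => (z - a) / (b - a) * (q - p)).intervalIntegrable a b
  simp only [chord]
  rw [intervalIntegral.integral_add intervalIntegrable_const hlin,
    intervalIntegral.integral_mul_const, intervalIntegral.integral_div,
    intervalIntegral.integral_comp_sub_right (fun x => x), integral_id,
    intervalIntegral.integral_const]
  field_simp
  ring

theorem indicator_chord_nonneg {s : Set ℝ} (hs : s ⊆ Icc a b) (hp : 0 ≤ p) (hq : 0 ≤ q)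
    (z : ℝ) : 0 ≤ s.indicator (chord a b p q) z :=
  indicator_nonneg (fun _ hz => chord_nonneg hp hq (hs hz)) z

theorem integrable_indicator_chord {s : Set ℝ} (hsm : MeasurableSet s) (hs : s ⊆ Icc a b) :
    Integrable (s.indicator (chord a b p q)) :=
  ((continuous_chord a b p q).integrableOn_Icc.mono_set hs).integrable_indicator hsm

theorem integral_indicator_chord {s : Set ℝ} (hsm : MeasurableSet s) (hs : s =ᵐ[volume] Ioc a b)
    (hab : a ≤ b) : ∫ z, s.indicator (chord a b p q) z = (b - a) * (p + q) / 2 := by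
  rw [integral_indicator hsm, setIntegral_congr_set hs, ← intervalIntegral.integral_of_le hab,
    integral_chord]

end Chord

theorem fIota_eq_sum_indicator_chord (ι ξ z x : ℝ) :
    fIota ι ξ z x =
      (Ico x (x + ξ)).indicator (chord x (x + ξ) 1 (hconst ι ξ)) z
      + (Ico (x + ξ) (x + ξ + 1)).indicator
          (chord (x + ξ) (x + ξ + 1) (hconst ι ξ) (hconst ι ξ - ι)) z
      + (Icc (x + ξ + 1) (x + ξ + 1 + ι)).indicator
          (chord (x + ξ + 1) (x + ξ + 1 + ι) (hconst ι ξ - ι) 0) z := by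
  simp only [fIota, indicator_apply, mem_Ico, mem_Icc, chord, add_sub_cancel_left]
  split_ifs <;> first | (exfalso; grind) | ring

theorem iota_lt_hconst {ι ξ : ℝ} (hι : 0 < 1 + ι) (hden : 0 < 2 + ξ + ι)
    (hξ : ξ < (2 - ι) / (1 + ι)) : ι < hconst ι ξ := by
  rw [lt_div_iff₀ hι] at hξ
  rw [hconst, lt_div_iff₀ hden]
  linarith

/-- `h` is chosen so that the areas of the trapezoid, the near-rectangle and the triangle
add up to `1`. -/
theorem hconst_mass {ι ξ : ℝ} (hden : 2 + ξ + ι ≠ 0) :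
    ξ * (1 + hconst ι ξ) / 2 + 1 * (hconst ι ξ + (hconst ι ξ - ι)) / 2
      + ι * (hconst ι ξ - ι + 0) / 2 = 1 := by
  rw [hconst]
  field_simp
  ring

/-- For `ι ∈ (0,1)` and `ξ ∈ [1, (2−ι)/(1+ι))`, for every `x`
the function `z ↦ f_ι(z,x)` is nonnegative on `ℝ` and integrates to `1`
(with respect to Lebesgue measure); that is, `f_ι(·,x)` is a probability
density. -/
theorem stmt_6 (ι ξ : ℝ) (hι : ι ∈ Ioo (0 : ℝ) 1)
    (hξ1 : 1 ≤ ξ) (hξ2 : ξ < (2 - ι) / (1 + ι)) :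
    ∀ x : ℝ, (∀ z : ℝ, 0 ≤ fIota ι ξ z x) ∧ (∫ z, fIota ι ξ z x) = 1 := by
  obtain ⟨hι0, -⟩ := hι
  have hden : 0 < 2 + ξ + ι := by linarith
  have hιh : ι < hconst ι ξ := iota_lt_hconst (by linarith) hden hξ2
  intro x
  refine ⟨fun z => ?_, ?_⟩
  · rw [fIota_eq_sum_indicator_chord]
    refine add_nonneg (add_nonneg ?_ ?_) ?_
    · exact indicator_chord_nonneg Ico_subset_Icc_self zero_le_one (by linarith) z
    · exact indicator_chord_nonneg Ico_subset_Icc_self (by linarith) (by linarith) z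
    · exact indicator_chord_nonneg subset_rfl (by linarith) le_rfl z
  · have i₁ := integrable_indicator_chord measurableSet_Ico Ico_subset_Icc_self
      (a := x) (b := x + ξ) (p := 1) (q := hconst ι ξ)
    have i₂ := integrable_indicator_chord measurableSet_Ico Ico_subset_Icc_self
      (a := x + ξ) (b := x + ξ + 1) (p := hconst ι ξ) (q := hconst ι ξ - ι)
    have i₃ := integrable_indicator_chord measurableSet_Icc subset_rfl
      (a := x + ξ + 1) (b := x + ξ + 1 + ι) (p := hconst ι ξ - ι) (q := 0)
    simp_rw [fIota_eq_sum_indicator_chord]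
    rw [integral_add (i₁.fun_add i₂) i₃, integral_add i₁ i₂,
      integral_indicator_chord measurableSet_Ico Ico_ae_eq_Ioc (by linarith),
      integral_indicator_chord measurableSet_Ico Ico_ae_eq_Ioc (by linarith),
      integral_indicator_chord measurableSet_Icc Ioc_ae_eq_Icc.symm (by linarith)]
    simp only [add_sub_cancel_left]
    exact hconst_mass hden.ne'
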